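/- Let π be a finite-to-one one-block factor code from a one-step SFT X onto an irreducible sofic shift Y, and let W be a magic block with magic coordinate c, i.e., |{a : ∃ W' ∈ π_b^{-1}(W), W'_c = a}| = d*_π. With G and G' the forward and backward subset-construction graphs, let Ū be the unique G-walk over W_0…W_c starting at π_b^{-1}(W_0), and V̄ the unique G'-walk over W_c…W_k ending at π_b^{-1}(W_k). Then Ū_c ∈ S, V̄_c ∈ S', and Ū_c ∩ V̄_c = {a : ∃ W' ∈ π_b^{-1}(W), W'_c = a}; hence min{|A ∩ A'| : A ∈ S, A' ∈ S', A ∩ A' ≠ ∅} ≤ d*_π. -/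

import Mathlib

/-!
Along the word, the forward walk from the full fiber of `W₀` is forced: by induction its vertex
at position `i` is the set of terminal symbols of preimages of `W₀ … Wᵢ`, and dually the
backward walk into the full fiber of `W_k` sits, at position `c`, on the set of initial symbols
of preimages of `W_c … W_k`. Since `X` is a one-step shift of finite type, a preimage of the
prefix ending in `a` and a preimage of the suffix starting in `a` glue along that shared symbol
to a preimage of `W` passing through `a` at `c`; so the intersection is `π_b⁻¹(W)_c`, nonempty
because `W` is a block and of size `d*_π` because `W` is magic. The walks themselves show that
their endpoints lie in `S` and `S'`.
-/

open List

/-- `U` is a (nonempty) block of the one-step SFT `X` determined by the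
transition relation `TX`. -/
def IsXBlock {AX : Type*} (TX : AX → AX → Prop) (U : List AX) : Prop :=
  U ≠ [] ∧ U.Chain' TX

/-- The set of `X`-blocks mapping (symbol-wise, via `πb`) to the word `W`. -/
def preim {AX AY : Type*} (TX : AX → AX → Prop) (πb : AX → AY) (W : List AY) :
    Set (List AX) :=
  {U | IsXBlock TX U ∧ U.map πb = W}

/-- `W` is a block of the sofic shift `Y = π(X)`. -/
def IsYBlock {AX AY : Type*} (TX : AX → AX → Prop) (πb : AX → AY) (W : List AY) : Prop :=
  (preim TX πb W).Nonempty

/-- `π_b^{-1}(W)_i`: the symbols occurring at position `i` in some preimage block of `W`. -/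
def preimAt {AX AY : Type*} (TX : AX → AX → Prop) (πb : AX → AY) (W : List AY) (i : ℕ) :
    Set AX :=
  {a | ∃ U ∈ preim TX πb W, U[i]? = some a}

/-- The `W`-pairing: the set of (first symbol, last symbol) pairs realized by
preimage blocks of `W`. -/
def pairing {AX AY : Type*} (TX : AX → AX → Prop) (πb : AX → AY) (W : List AY) :
    Set (AX × AX) :=
  {p | ∃ U ∈ preim TX πb W, U.head? = some p.1 ∧ U.getLast? = some p.2}

/-- `U ∈ π_b^{-1}(W)` is routable through `a` at time `n`. -/
def Routable {AX AY : Type*} (TX : AX → AX → Prop) (πb : AX → AY) (W : List AY) (n : ℕ)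
    (a : AX) (U : List AX) : Prop :=
  ∃ U' ∈ preim TX πb W, U'.head? = U.head? ∧ U'[n]? = some a ∧ U'.getLast? = U.getLast?

/-- `(W, n, M)` is a transition block. -/
def IsTransBlock {AX AY : Type*} (TX : AX → AX → Prop) (πb : AX → AY) (W : List AY)
    (n : ℕ) (M : Finset AX) : Prop :=
  IsYBlock TX πb W ∧ 0 < n ∧ n < W.length - 1 ∧
    (∀ a ∈ M, a ∈ preimAt TX πb W n) ∧
    ∀ U ∈ preim TX πb W, ∃ a ∈ M, Routable TX πb W n a U

/-- The fiber `π_b^{-1}(b)` of a `Y`-symbol. -/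
def fiber {AX AY : Type*} [Fintype AX] [DecidableEq AY] (πb : AX → AY) (b : AY) :
    Finset AX :=
  Finset.univ.filter (fun a => πb a = b)

/-- `f = max_{w ∈ 𝒜(Y)} |π_b^{-1}(w)|`. -/
def fMax {AX AY : Type*} [Fintype AX] [Fintype AY] [DecidableEq AY] (πb : AX → AY) : ℕ :=
  Finset.univ.sup (fun b : AY => (fiber πb b).card)

/-- Edge of the forward subset-construction graph `G`. -/
def edgeG {AX AY : Type*} [Fintype AX] [DecidableEq AX] [DecidableEq AY]
    (TX : AX → AX → Prop) [DecidableRel TX] (πb : AX → AY) :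
    AY × Finset AX → AY × Finset AX → Prop := fun p q =>
  p.2 ⊆ fiber πb p.1 ∧ q.2 ⊆ fiber πb q.1 ∧ IsYBlock TX πb [p.1, q.1] ∧
    q.2 = (fiber πb q.1).filter (fun a' => ∃ a ∈ p.2, TX a a')

/-- Edge of the backward subset-construction graph `G'`. -/
def edgeG' {AX AY : Type*} [Fintype AX] [DecidableEq AX] [DecidableEq AY]
    (TX : AX → AX → Prop) [DecidableRel TX] (πb : AX → AY) :
    AY × Finset AX → AY × Finset AX → Prop := fun p q =>
  p.2 ⊆ fiber πb p.1 ∧ q.2 ⊆ fiber πb q.1 ∧ IsYBlock TX πb [p.1, q.1] ∧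
    p.2 = (fiber πb p.1).filter (fun a => ∃ a' ∈ q.2, TX a a')

/-- `p ∈ S`: reachable in `G` from a full-fiber vertex of `𝒰`. -/
def reachG {AX AY : Type*} [Fintype AX] [DecidableEq AX] [DecidableEq AY]
    (TX : AX → AX → Prop) [DecidableRel TX] (πb : AX → AY) (p : AY × Finset AX) : Prop :=
  ∃ b0 : AY, Relation.ReflTransGen (edgeG TX πb) (b0, fiber πb b0) p

/-- `p ∈ S'`: some full-fiber vertex of `𝒰` is reachable from `p` in `G'`. -/
def reachG' {AX AY : Type*} [Fintype AX] [DecidableEq AX] [DecidableEq AY]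
    (TX : AX → AX → Prop) [DecidableRel TX] (πb : AX → AY) (p : AY × Finset AX) : Prop :=
  ∃ b0 : AY, Relation.ReflTransGen (edgeG' TX πb) p (b0, fiber πb b0)

/-- `d*_π`: the minimum over `Y`-blocks `W` and positions `i` of `|π_b^{-1}(W)_i|`. -/
noncomputable def dstar {AX AY : Type*} (TX : AX → AX → Prop) (πb : AX → AY) : ℕ :=
  sInf {k | ∃ (W : List AY) (i : ℕ), IsYBlock TX πb W ∧ i < W.length ∧
    (preimAt TX πb W i).ncard = k}

/-- `U` is a walk in `G` over the label word `W`. -/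
def IsGWalk {AX AY : Type*} [Fintype AX] [DecidableEq AX] [DecidableEq AY]
    (TX : AX → AX → Prop) [DecidableRel TX] (πb : AX → AY)
    (W : List AY) (U : List (Finset AX)) : Prop :=
  U.length = W.length ∧
    (∀ (i : ℕ) (b : AY) (A : Finset AX), W[i]? = some b → U[i]? = some A → A ⊆ fiber πb b) ∧
    (∀ (i : ℕ) (b b' : AY) (A A' : Finset AX), W[i]? = some b → W[i + 1]? = some b' →
      U[i]? = some A → U[i + 1]? = some A' → edgeG TX πb (b, A) (b', A'))

/-- `U` is a walk in `G'` over the label word `W`. -/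
def IsG'Walk {AX AY : Type*} [Fintype AX] [DecidableEq AX] [DecidableEq AY]
    (TX : AX → AX → Prop) [DecidableRel TX] (πb : AX → AY)
    (W : List AY) (U : List (Finset AX)) : Prop :=
  U.length = W.length ∧
    (∀ (i : ℕ) (b : AY) (A : Finset AX), W[i]? = some b → U[i]? = some A → A ⊆ fiber πb b) ∧
    (∀ (i : ℕ) (b b' : AY) (A A' : Finset AX), W[i]? = some b → W[i + 1]? = some b' →
      U[i]? = some A → U[i + 1]? = some A' → edgeG' TX πb (b, A) (b', A'))

section Symbols

variable {AX AY : Type*} (TX : AX → AX → Prop) (πb : AX → AY)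

def lastSymbols (W : List AY) : Set AX :=
  {a | ∃ P ∈ preim TX πb W, P.getLast? = some a}

def firstSymbols (W : List AY) : Set AX :=
  {a | ∃ P ∈ preim TX πb W, P.head? = some a}

variable {TX πb}

lemma mem_preim_iff_of_ne_nil {W : List AY} (hW : W ≠ []) {P : List AX} :
    P ∈ preim TX πb W ↔ P.IsChain TX ∧ P.map πb = W := by
  refine ⟨fun h => ⟨h.1.2, h.2⟩, fun h => ⟨⟨?_, h.1⟩, h.2⟩⟩
  rintro rfl
  exact hW h.2.symm

lemma length_eq_of_mem_preim {W : List AY} {P : List AX} (h : P ∈ preim TX πb W) :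
    P.length = W.length := by
  simpa using congrArg List.length h.2

lemma take_mem_preim {W : List AY} {P : List AX} (h : P ∈ preim TX πb W) {n : ℕ} (hn : 0 < n) :
    P.take n ∈ preim TX πb (W.take n) := by
  refine ⟨⟨?_, h.1.2.take n⟩, by rw [← h.2, List.map_take]⟩
  simpa [List.take_eq_nil_iff, h.1.1] using hn.ne'

lemma drop_mem_preim {W : List AY} {P : List AX} (h : P ∈ preim TX πb W) {n : ℕ}
    (hn : n < W.length) : P.drop n ∈ preim TX πb (W.drop n) := by
  refine ⟨⟨?_, h.1.2.drop n⟩, by rw [← h.2, List.map_drop]⟩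
  simpa [List.drop_eq_nil_iff, length_eq_of_mem_preim h] using hn

lemma preimAt_nonempty {W : List AY} (hW : IsYBlock TX πb W) {c : ℕ} (hc : c < W.length) :
    (preimAt TX πb W c).Nonempty := by
  obtain ⟨P, hP⟩ := hW
  exact ⟨P[c]'(by rw [length_eq_of_mem_preim hP]; exact hc), P, hP, List.getElem?_eq_getElem _⟩

lemma lastSymbols_singleton (b : AY) : lastSymbols TX πb [b] = {a | πb a = b} := by
  ext a
  simp only [lastSymbols, mem_preim_iff_of_ne_nil (List.cons_ne_nil b []),
    List.map_eq_singleton_iff]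
  constructor
  · rintro ⟨P, ⟨-, a', rfl, rfl⟩, h⟩
    simp_all
  · intro h
    exact ⟨[a], ⟨List.isChain_singleton a, a, rfl, h⟩, rfl⟩

lemma firstSymbols_singleton (b : AY) : firstSymbols TX πb [b] = {a | πb a = b} := by
  ext a
  simp only [firstSymbols, mem_preim_iff_of_ne_nil (List.cons_ne_nil b []),
    List.map_eq_singleton_iff]
  constructor
  · rintro ⟨P, ⟨-, a', rfl, rfl⟩, h⟩
    simp_all
  · intro h
    exact ⟨[a], ⟨List.isChain_singleton a, a, rfl, h⟩, rfl⟩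

lemma mem_lastSymbols_append_singleton {W : List AY} (hW : W ≠ []) {b : AY} {a' : AX} :
    a' ∈ lastSymbols TX πb (W ++ [b]) ↔ πb a' = b ∧ ∃ a ∈ lastSymbols TX πb W, TX a a' := by
  simp only [lastSymbols, mem_preim_iff_of_ne_nil hW,
    mem_preim_iff_of_ne_nil (List.concat_ne_nil b W)]
  constructor
  · rintro ⟨P, ⟨hchain, hmap⟩, hlast⟩
    obtain ⟨P, _, rfl, hP, hsing⟩ := List.map_eq_append_iff.1 hmap
    obtain ⟨x, rfl, rfl⟩ := List.map_eq_singleton_iff.1 hsing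
    obtain ⟨hP', -, hlink⟩ := List.isChain_append.1 hchain
    obtain rfl : a' = x := by simpa using hlast.symm
    obtain ⟨a, ha⟩ : ∃ a, P.getLast? = some a := Option.ne_none_iff_exists'.1 <| by
      rw [Ne, List.getLast?_eq_none_iff]
      rintro rfl
      exact hW (by simpa using hP.symm)
    exact ⟨rfl, a, ⟨P, ⟨hP', hP⟩, ha⟩, hlink a ha a' rfl⟩
  · rintro ⟨rfl, a, ⟨P, ⟨hP, hmap⟩, ha⟩, hT⟩
    refine ⟨P ++ [a'], ⟨List.isChain_append.2 ⟨hP, List.isChain_singleton a', ?_⟩, ?_⟩, by simp⟩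
    · simp_all
    · simp [hmap]

lemma mem_firstSymbols_cons {W : List AY} (hW : W ≠ []) {b : AY} {a : AX} :
    a ∈ firstSymbols TX πb (b :: W) ↔ πb a = b ∧ ∃ a' ∈ firstSymbols TX πb W, TX a a' := by
  simp only [firstSymbols, mem_preim_iff_of_ne_nil hW,
    mem_preim_iff_of_ne_nil (List.cons_ne_nil b W)]
  constructor
  · rintro ⟨P, ⟨hchain, hmap⟩, hhead⟩
    obtain ⟨x, P, rfl, hx, hP⟩ := List.map_eq_cons_iff.1 hmap
    obtain rfl : a = x := by simpa using hhead.symm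
    obtain ⟨hlink, hP'⟩ := List.isChain_cons.1 hchain
    obtain ⟨a', ha'⟩ : ∃ a', P.head? = some a' := Option.ne_none_iff_exists'.1 <| by
      rw [Ne, List.head?_eq_none_iff]
      rintro rfl
      exact hW (by simpa using hP.symm)
    exact ⟨hx, a', ⟨P, ⟨hP', hP⟩, ha'⟩, hlink a' ha'⟩
  · rintro ⟨rfl, a', ⟨P, ⟨hP, hmap⟩, ha'⟩, hT⟩
    refine ⟨a :: P, ⟨List.isChain_cons.2 ⟨?_, hP⟩, by simp [hmap]⟩, rfl⟩
    simp_all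

lemma preimAt_eq_lastSymbols_inter_firstSymbols {W : List AY} {c : ℕ} (hc : c < W.length) :
    preimAt TX πb W c = lastSymbols TX πb (W.take (c + 1)) ∩ firstSymbols TX πb (W.drop c) := by
  ext a
  constructor
  · rintro ⟨Q, hQ, hQc⟩
    refine ⟨⟨Q.take (c + 1), take_mem_preim hQ c.succ_pos, ?_⟩,
      Q.drop c, drop_mem_preim hQ hc, by rw [List.head?_drop, hQc]⟩
    simp [List.getLast?_take, hQc]
  · rintro ⟨⟨P, hP, hPa⟩, Q, hQ, hQa⟩
    obtain ⟨Q, rfl⟩ : ∃ Q', Q = a :: Q' := by cases Q <;> simp_all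
    have hPlen : P.length = c + 1 := by
      rw [length_eq_of_mem_preim hP, List.length_take]
      omega
    obtain ⟨hlink, hQchain⟩ := List.isChain_cons.1 hQ.1.2
    have hQmap : Q.map πb = W.drop (c + 1) := by simpa using congrArg List.tail hQ.2
    refine ⟨P ++ Q, ⟨⟨by simp [hP.1.1], List.isChain_append.2 ⟨hP.1.2, hQchain, ?_⟩⟩, ?_⟩, ?_⟩
    · simpa [hPa] using hlink
    · rw [List.map_append, hP.2, hQmap, List.take_append_drop]
    · rw [List.getElem?_append_left (by omega), ← hPa, List.getLast?_eq_getElem?, hPlen,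
        Nat.add_sub_cancel]

end Symbols

lemma coe_fiber {AX AY : Type*} [Fintype AX] [DecidableEq AY] (πb : AX → AY) (b : AY) :
    (fiber πb b : Set AX) = {a | πb a = b} := by
  ext
  simp [fiber]

lemma List.getElem?_zero_of_head?_eq_map {α β : Type*} {f : α → β} {l : List α} {L : List β}
    (h : L.head? = l.head?.map f) (hl : 0 < l.length) : L[0]? = some (f l[0]) := by
  rw [← List.head?_eq_getElem?, h, List.head?_eq_getElem?, List.getElem?_eq_getElem hl,
    Option.map_some]

lemma List.getElem?_of_getLast?_eq_map {α β : Type*} {f : α → β} {l : List α} {L : List β}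
    (h : L.getLast? = l.getLast?.map f) (hlen : L.length = l.length) {i : ℕ}
    (hi : i + 1 = l.length) : L[i]? = some (f (l[i]'(by omega))) := by
  have hmap : L[i]? = l[i]?.map f := by
    obtain rfl : i = l.length - 1 := by omega
    rw [← List.getLast?_eq_getElem?, ← h, List.getLast?_eq_getElem?, hlen]
  rw [hmap, List.getElem?_eq_getElem, Option.map_some]

section SubsetGraphs

variable {AX AY : Type*} [Fintype AX] [DecidableEq AX] [DecidableEq AY]
  {TX : AX → AX → Prop} [DecidableRel TX] {πb : AX → AY}

lemma coe_eq_lastSymbols_of_edgeG {Z : List AY} (hZ : Z ≠ []) {b b' : AY} {A A' : Finset AX}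
    (hedge : edgeG TX πb (b, A) (b', A')) (hA : (A : Set AX) = lastSymbols TX πb Z) :
    (A' : Set AX) = lastSymbols TX πb (Z ++ [b']) := by
  ext a'
  rw [mem_lastSymbols_append_singleton hZ, show A' = _ from hedge.2.2.2, ← hA]
  simp [fiber]

lemma coe_eq_firstSymbols_of_edgeG' {Z : List AY} (hZ : Z ≠ []) {b b' : AY} {A A' : Finset AX}
    (hedge : edgeG' TX πb (b, A) (b', A')) (hA' : (A' : Set AX) = firstSymbols TX πb Z) :
    (A : Set AX) = firstSymbols TX πb (b :: Z) := by
  ext a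
  rw [mem_firstSymbols_cons hZ, show A = _ from hedge.2.2.2, ← hA']
  simp [fiber]

lemma IsGWalk.coe_eq_lastSymbols {Z : List AY} {U : List (Finset AX)} (hU : IsGWalk TX πb Z U)
    (hhead : U.head? = Z.head?.map (fiber πb)) {i : ℕ} (hi : i < Z.length) {A : Finset AX}
    (hA : U[i]? = some A) : (A : Set AX) = lastSymbols TX πb (Z.take (i + 1)) := by
  induction i generalizing A with
  | zero =>
    obtain rfl : A = fiber πb Z[0] := by
      simpa [List.getElem?_zero_of_head?_eq_map hhead hi] using hA.symm
    rw [List.take_one, List.head?_eq_getElem?, List.getElem?_eq_getElem hi, coe_fiber]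
    exact (lastSymbols_singleton _).symm
  | succ i ih =>
    obtain ⟨A₀, hA₀⟩ : ∃ A₀, U[i]? = some A₀ :=
      ⟨U[i]'(by rw [hU.1]; omega), List.getElem?_eq_getElem _⟩
    have hedge := hU.2.2 i _ _ A₀ A (List.getElem?_eq_getElem (by omega))
      (List.getElem?_eq_getElem hi) hA₀ hA
    rw [List.take_add_one (i := i + 1), List.getElem?_eq_getElem hi, Option.toList_some]
    refine coe_eq_lastSymbols_of_edgeG (List.ne_nil_of_length_pos ?_) hedge (ih (by omega) hA₀)
    rw [List.length_take]
    omega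

lemma IsGWalk.reachG_getElem {Z : List AY} {U : List (Finset AX)} (hU : IsGWalk TX πb Z U)
    (hhead : U.head? = Z.head?.map (fiber πb)) {i : ℕ} (hi : i < Z.length) {A : Finset AX}
    (hA : U[i]? = some A) : reachG TX πb (Z[i], A) := by
  induction i generalizing A with
  | zero =>
    obtain rfl : A = fiber πb Z[0] := by
      simpa [List.getElem?_zero_of_head?_eq_map hhead hi] using hA.symm
    exact ⟨Z[0], .refl⟩
  | succ i ih =>
    obtain ⟨A₀, hA₀⟩ : ∃ A₀, U[i]? = some A₀ :=
      ⟨U[i]'(by rw [hU.1]; omega), List.getElem?_eq_getElem _⟩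
    obtain ⟨b₀, hpath⟩ := ih (by omega) hA₀
    exact ⟨b₀, hpath.tail (hU.2.2 i _ _ A₀ A (List.getElem?_eq_getElem (by omega))
      (List.getElem?_eq_getElem hi) hA₀ hA)⟩

lemma IsG'Walk.coe_eq_firstSymbols {Z : List AY} {V : List (Finset AX)}
    (hV : IsG'Walk TX πb Z V) (hlast : V.getLast? = Z.getLast?.map (fiber πb)) {i : ℕ}
    (hi : i < Z.length) {A : Finset AX} (hA : V[i]? = some A) :
    (A : Set AX) = firstSymbols TX πb (Z.drop i) := by
  obtain ⟨k, hk⟩ := Nat.exists_eq_add_of_lt hi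
  induction k generalizing i A with
  | zero =>
    obtain rfl : A = fiber πb Z[i] := by
      simpa [List.getElem?_of_getLast?_eq_map hlast hV.1 hk.symm] using hA.symm
    rw [List.drop_eq_getElem_cons hi, List.drop_eq_nil_of_le (by omega), coe_fiber]
    exact (firstSymbols_singleton _).symm
  | succ k ih =>
    obtain ⟨A₁, hA₁⟩ : ∃ A₁, V[i + 1]? = some A₁ :=
      ⟨V[i + 1]'(by rw [hV.1]; omega), List.getElem?_eq_getElem _⟩
    have hedge := hV.2.2 i _ _ A A₁ (List.getElem?_eq_getElem hi)
      (List.getElem?_eq_getElem (by omega)) hA hA₁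
    rw [List.drop_eq_getElem_cons hi]
    refine coe_eq_firstSymbols_of_edgeG' (List.ne_nil_of_length_pos ?_) hedge
      (ih (by omega) hA₁ (by omega))
    rw [List.length_drop]
    omega

lemma IsG'Walk.reachG'_getElem {Z : List AY} {V : List (Finset AX)}
    (hV : IsG'Walk TX πb Z V) (hlast : V.getLast? = Z.getLast?.map (fiber πb)) {i : ℕ}
    (hi : i < Z.length) {A : Finset AX} (hA : V[i]? = some A) : reachG' TX πb (Z[i], A) := by
  obtain ⟨k, hk⟩ := Nat.exists_eq_add_of_lt hi
  induction k generalizing i A with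
  | zero =>
    obtain rfl : A = fiber πb Z[i] := by
      simpa [List.getElem?_of_getLast?_eq_map hlast hV.1 hk.symm] using hA.symm
    exact ⟨Z[i], .refl⟩
  | succ k ih =>
    obtain ⟨A₁, hA₁⟩ : ∃ A₁, V[i + 1]? = some A₁ :=
      ⟨V[i + 1]'(by rw [hV.1]; omega), List.getElem?_eq_getElem _⟩
    obtain ⟨b₀, hpath⟩ := ih (by omega) hA₁ (by omega)
    exact ⟨b₀, hpath.head (hV.2.2 i _ _ A A₁ (List.getElem?_eq_getElem hi)
      (List.getElem?_eq_getElem (by omega)) hA hA₁)⟩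

end SubsetGraphs

theorem magic_block_graphs_general {AX AY : Type*}
    [Fintype AX] [DecidableEq AX] [DecidableEq AY]
    (TX : AX → AX → Prop) [DecidableRel TX] (πb : AX → AY)
    (W : List AY) (c : ℕ) (hW : IsYBlock TX πb W) (hc : c < W.length)
    (hmagic : (preimAt TX πb W c).ncard = dstar TX πb)
    (U V : List (Finset AX)) (A A' : Finset AX)
    (hU : IsGWalk TX πb (W.take (c + 1)) U)
    (hUhead : U.head? = (W.take (c + 1)).head?.map (fiber πb))
    (hUlast : U.getLast? = some A)
    (hV : IsG'Walk TX πb (W.drop c) V)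
    (hVlast : V.getLast? = (W.drop c).getLast?.map (fiber πb))
    (hVhead : V.head? = some A') :
    (∀ b ∈ W[c]?, reachG TX πb (b, A)) ∧
    (∀ b ∈ W[c]?, reachG' TX πb (b, A')) ∧
    (↑(A ∩ A') : Set AX) = preimAt TX πb W c ∧
    sInf {k | ∃ p p' : AY × Finset AX, reachG TX πb p ∧ reachG' TX πb p' ∧
        (p.2 ∩ p'.2).Nonempty ∧ (p.2 ∩ p'.2).card = k} ≤ dstar TX πb := by
  have hcZ : c < (W.take (c + 1)).length := by simp only [List.length_take]; omega
  have h0 : 0 < (W.drop c).length := by simp only [List.length_drop]; omega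
  have hUc : U[c]? = some A := by
    rw [← hUlast, List.getLast?_eq_getElem?, hU.1, List.length_take, Nat.min_eq_left hc]
    rfl
  have hV0 : V[0]? = some A' := by rw [← hVhead, List.head?_eq_getElem?]
  have hinter : ((A ∩ A' : Finset AX) : Set AX) = preimAt TX πb W c := by
    rw [Finset.coe_inter, hU.coe_eq_lastSymbols hUhead hcZ hUc,
      hV.coe_eq_firstSymbols hVlast h0 hV0, List.take_take, min_self, List.drop_zero,
      preimAt_eq_lastSymbols_inter_firstSymbols hc]
  have hS : reachG TX πb (W[c], A) := by simpa using hU.reachG_getElem hUhead hcZ hUc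
  have hS' : reachG' TX πb (W[c], A') := by simpa using hV.reachG'_getElem hVlast h0 hV0
  refine ⟨by simpa [List.getElem?_eq_getElem hc] using hS,
    by simpa [List.getElem?_eq_getElem hc] using hS', hinter,
    Nat.sInf_le ⟨_, _, hS, hS', ?_, ?_⟩⟩
  · rw [← Finset.coe_nonempty, hinter]
    exact preimAt_nonempty hW hc
  · rw [← hmagic, ← hinter, Set.ncard_coe_finset]

/-- If `W` is a magic block with magic coordinate `c`, the forward walk over
`W_0…W_c` from the full fiber of `W_0` and the backward walk over `W_c…W_k`
into the full fiber of `W_k` end/start at vertices `A ∈ S`, `A' ∈ S'` with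
`A ∩ A' = π_b^{-1}(W)_c`; hence
`min{|A ∩ A'| : A ∈ S, A' ∈ S', A ∩ A' ≠ ∅} ≤ d*_π`. -/
theorem magic_block_graphs {AX AY : Type*}
    [Fintype AX] [Fintype AY] [DecidableEq AX] [DecidableEq AY] [Nonempty AX]
    (TX : AX → AX → Prop) [DecidableRel TX] (πb : AX → AY)
    (hfin : ∃ K : ℕ, ∀ W : List AY, IsYBlock TX πb W → (preim TX πb W).ncard ≤ K)
    (hirr : ∀ U V : List AY, IsYBlock TX πb U → IsYBlock TX πb V →
      ∃ C : List AY, IsYBlock TX πb (U ++ C ++ V))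
    (W : List AY) (c : ℕ) (hW : IsYBlock TX πb W) (hc : c < W.length)
    (hmagic : (preimAt TX πb W c).ncard = dstar TX πb)
    (U V : List (Finset AX)) (A A' : Finset AX)
    (hU : IsGWalk TX πb (W.take (c + 1)) U)
    (hUhead : U.head? = (W.take (c + 1)).head?.map (fiber πb))
    (hUlast : U.getLast? = some A)
    (hV : IsG'Walk TX πb (W.drop c) V)
    (hVlast : V.getLast? = (W.drop c).getLast?.map (fiber πb))
    (hVhead : V.head? = some A') :
    (∀ b ∈ W[c]?, reachG TX πb (b, A)) ∧
    (∀ b ∈ W[c]?, reachG' TX πb (b, A')) ∧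
    (↑(A ∩ A') : Set AX) = preimAt TX πb W c ∧
    sInf {k | ∃ p p' : AY × Finset AX, reachG TX πb p ∧ reachG' TX πb p' ∧
        (p.2 ∩ p'.2).Nonempty ∧ (p.2 ∩ p'.2).card = k} ≤ dstar TX πb :=
  magic_block_graphs_general TX πb W c hW hc hmagic U V A A' hU hUhead hUlast hV hVlast hVhead
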